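/- Let K_{n,m} be the complete bipartite quiver with sources x_1,...,x_n and sinks y_1,...,y_m, and let V_X be the representation given by vectors v_i^j ∈ ℝ^{d_j} on the arrow x_i → y_j, with V_X(x_i) = ℝ and V_X(y_j) = ℝ^{d_j}. Set D = Σ_j d_j and σ_0(x_i) = D, σ_0(y_j) = −n. Then V_X is σ_0-semi-stable if and only if for every m-tuple of subspaces (T_1,...,T_m) with T_j ≤ ℝ^{d_j}: D·|{i ∈ [n] : v_i^j ∈ T_j for all j}| ≤ n·(Σ_{j=1}^m dim T_j). -/

import Mathlib

/-! A subrepresentation `W` is only made larger, and its `σ₀`-weight `D·∑ dim W(xᵢ) - n·∑ dim W(yⱼ)`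
only larger, by keeping the spaces `Tⱼ = W(yⱼ)` at the sinks and putting `W(xᵢ) = ℝ` at every source
whose vectors `vᵢʲ` all lie in the `Tⱼ`. So it suffices to test semi-stability on these
subrepresentations `W_T`, whose weight is `D·|{i | ∀ j, vᵢʲ ∈ Tⱼ}| - n·∑ dim Tⱼ`. -/

open Finset

namespace Submodule

variable {K : Type*} [Field K] {V : Type*} [AddCommGroup V] [Module K V]

theorem map_toSpanSingleton_top_le_iff {x : V} {U : Submodule K V} :
    (⊤ : Submodule K K).map (LinearMap.toSpanSingleton K V x) ≤ U ↔ x ∈ U := by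
  rw [map_top, ← LinearMap.span_singleton_eq_range, span_singleton_le_iff_mem]

theorem mem_of_map_toSpanSingleton_le {W : Submodule K K} (hW : W ≠ ⊥) {x : V}
    {U : Submodule K V} (h : W.map (LinearMap.toSpanSingleton K V x) ≤ U) : x ∈ U := by
  rw [← map_toSpanSingleton_top_le_iff]
  rwa [(Ideal.eq_bot_or_top W).resolve_left hW] at h

end Submodule

section CompleteBipartite

variable {K : Type*} [Field K] {ι κ : Type*} {V : κ → Type*}
  [∀ j, AddCommGroup (V j)] [∀ j, Module K (V j)]

open Classical in
/-- The source spaces of the subrepresentation `W_T` with sink spaces `T`. -/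
noncomputable def sourceSubspaces (v : ι → ∀ j, V j) (T : ∀ j, Submodule K (V j)) :
    ι → Submodule K K :=
  fun i => if ∀ j, v i j ∈ T j then ⊤ else ⊥

theorem map_sourceSubspaces_le (v : ι → ∀ j, V j) (T : ∀ j, Submodule K (V j)) (i : ι) (j : κ) :
    (sourceSubspaces v T i).map (LinearMap.toSpanSingleton K (V j) (v i j)) ≤ T j := by
  unfold sourceSubspaces
  split_ifs with hv
  · exact Submodule.map_toSpanSingleton_top_le_iff.mpr (hv j)
  · rw [Submodule.map_bot]
    exact bot_le

theorem sum_finrank_sourceSubspaces [Fintype ι] (v : ι → ∀ j, V j) (T : ∀ j, Submodule K (V j))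
    [DecidablePred fun i => ∀ j, v i j ∈ T j] :
    ∑ i, Module.finrank K (sourceSubspaces v T i) = #{i | ∀ j, v i j ∈ T j} := by
  rw [Finset.card_filter]
  refine Finset.sum_congr rfl fun i _ => ?_
  unfold sourceSubspaces
  by_cases hv : ∀ j, v i j ∈ T j
  · rw [if_pos hv, if_pos hv]
    exact (finrank_top K K).trans (Module.finrank_self K)
  · rw [if_neg hv, if_neg hv]
    exact finrank_bot K K

theorem finrank_le_ite_of_map_toSpanSingleton_le {x : ∀ j, V j} {W : Submodule K K}
    {U : ∀ j, Submodule K (V j)} [Decidable (∀ j, x j ∈ U j)]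
    (h : ∀ j, W.map (LinearMap.toSpanSingleton K (V j) (x j)) ≤ U j) :
    Module.finrank K W ≤ if ∀ j, x j ∈ U j then 1 else 0 := by
  rcases eq_or_ne W ⊥ with rfl | hW
  · simp
  · rw [if_pos fun j => Submodule.mem_of_map_toSpanSingleton_le hW (h j)]
    simpa using Submodule.finrank_le W

theorem sum_finrank_le_card_filter [Fintype ι] {v : ι → ∀ j, V j} {Wx : ι → Submodule K K}
    {Wy : ∀ j, Submodule K (V j)} [DecidablePred fun i => ∀ j, v i j ∈ Wy j]
    (h : ∀ i j, (Wx i).map (LinearMap.toSpanSingleton K (V j) (v i j)) ≤ Wy j) :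
    ∑ i, Module.finrank K (Wx i) ≤ #{i | ∀ j, v i j ∈ Wy j} := by
  rw [Finset.card_filter]
  exact Finset.sum_le_sum fun i _ => finrank_le_ite_of_map_toSpanSingleton_le (h i)

end CompleteBipartite

open scoped Classical

theorem stmt10_general {n m : ℕ} (d : Fin m → ℕ)
    (v : ∀ (_ : Fin n) (j : Fin m), Fin (d j) → ℝ)
    (D : ℕ) :
    (∀ (Wx : Fin n → Submodule ℝ ℝ) (Wy : ∀ j, Submodule ℝ (Fin (d j) → ℝ)),
        (∀ i j, (Wx i).map (LinearMap.toSpanSingleton ℝ (Fin (d j) → ℝ) (v i j)) ≤ Wy j) →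
        (D : ℤ) * (∑ i, (Module.finrank ℝ (Wx i) : ℤ)) -
            n * (∑ j, (Module.finrank ℝ (Wy j) : ℤ)) ≤ 0) ↔
      ∀ T : ∀ j : Fin m, Submodule ℝ (Fin (d j) → ℝ),
        D * (Finset.univ.filter fun i : Fin n => ∀ j, v i j ∈ T j).card ≤
          n * ∑ j, Module.finrank ℝ (T j) := by
  simp only [sub_nonpos]
  constructor
  · intro h T
    have hT := h (sourceSubspaces v T) T (map_sourceSubspaces_le v T)
    rw [← sum_finrank_sourceSubspaces v T]
    exact_mod_cast hT
  · intro h Wx Wy hW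
    calc (D : ℤ) * ∑ i, (Module.finrank ℝ (Wx i) : ℤ)
        ≤ D * #{i | ∀ j, v i j ∈ Wy j} := by
          gcongr
          exact_mod_cast sum_finrank_le_card_filter hW
      _ ≤ n * ∑ j, (Module.finrank ℝ (Wy j) : ℤ) := by exact_mod_cast h Wy

theorem stmt10 {n m : ℕ} (d : Fin m → ℕ)
    (v : ∀ (_ : Fin n) (j : Fin m), Fin (d j) → ℝ)
    (D : ℕ) (hD : D = ∑ j, d j) :
    (∀ (Wx : Fin n → Submodule ℝ ℝ) (Wy : ∀ j, Submodule ℝ (Fin (d j) → ℝ)),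
        (∀ i j, (Wx i).map (LinearMap.toSpanSingleton ℝ (Fin (d j) → ℝ) (v i j)) ≤ Wy j) →
        (D : ℤ) * (∑ i, (Module.finrank ℝ (Wx i) : ℤ)) -
            n * (∑ j, (Module.finrank ℝ (Wy j) : ℤ)) ≤ 0) ↔
      ∀ T : ∀ j : Fin m, Submodule ℝ (Fin (d j) → ℝ),
        D * (Finset.univ.filter fun i : Fin n => ∀ j, v i j ∈ T j).card ≤
          n * ∑ j, Module.finrank ℝ (T j) :=
  stmt10_general d v D
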